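/- Let μ be a k-rectifiable Radon measure on ℝⁿ and g ∈ L¹_loc(μ) a nonnegative density function satisfying μ = g·(Hᵏ⌊M) for a countably k-rectifiable set M with 0 < g < ∞ Hᵏ-a.e. on M. Then at Hᵏ-a.e. point x ∈ M that is a Lebesgue point of g, the rescaled measures r^{-k}·(φ ↦ ∫ φ((y−x)/r) dμ(y)) converge, as r → 0+, to g(x)·Hᵏ restricted to the approximate tangent plane T_x M; i.e. for every φ ∈ C⁰_c(ℝⁿ), lim_{r→0} r^{-k} ∫ φ((y−x)/r) dμ(y) = g(x) ∫_{T_x M} φ dHᵏ. -/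

import Mathlib

/-!
Write `g = g x + (g - g x)`. Against the constant `g x` the rescaled measures converge to
`g x · Hᵏ⌊T_x M` by the defining property of the approximate tangent plane. If `supp φ ⊆ B(0, R)`,
the remainder is bounded by `sup |φ| · r⁻ᵏ ∫_{B(x, rR)} |g - g x| dHᵏ⌊M`, which tends to `0`
exactly because `x` is a Lebesgue point of `g`.
-/

open MeasureTheory Metric Filter Topology

theorem integral_withDensity_ofReal_eq_integral_mul {X : Type*} [MeasurableSpace X]
    {ν : Measure X} {g : X → ℝ} (hgm : AEMeasurable g ν) (hg : ∀ᵐ y ∂ν, 0 ≤ g y) (f : X → ℝ) :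
    ∫ y, f y ∂ν.withDensity (fun y => ENNReal.ofReal (g y)) = ∫ y, g y * f y ∂ν := by
  rw [integral_withDensity_eq_integral_toReal_smul₀
    (f := fun y => ENNReal.ofReal (g y)) (ENNReal.measurable_ofReal.comp_aemeasurable hgm)
    (ae_of_all _ fun _ => ENNReal.ofReal_lt_top)]
  refine integral_congr_ae ?_
  filter_upwards [hg] with y hy
  rw [ENNReal.toReal_ofReal hy, smul_eq_mul]

theorem integral_mul_eq_mul_integral_add_integral_mul_sub {X : Type*} [MeasurableSpace X]
    {ν : Measure X} {f g : X → ℝ} (hf : Integrable f ν) (hgf : Integrable (fun y => g y * f y) ν)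
    (c : ℝ) : ∫ y, g y * f y ∂ν = c * ∫ y, f y ∂ν + ∫ y, f y * (g y - c) ∂ν := by
  have hsub : Integrable (fun y => g y * f y - c * f y) ν := hgf.sub (hf.const_mul c)
  rw [← integral_const_mul, ← integral_add (hf.const_mul c) ?_]
  · exact integral_congr_ae (ae_of_all _ fun y => by ring)
  · exact hsub.congr (ae_of_all _ fun y => by ring)

section Rescaling

variable {E : Type*} [NormedAddCommGroup E] [NormedSpace ℝ E]

theorem HasCompactSupport.comp_smul_sub {φ : E → ℝ} (hφ : HasCompactSupport φ) {r : ℝ}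
    (hr : r ≠ 0) (x : E) : HasCompactSupport (fun y => φ (r⁻¹ • (y - x))) :=
  hφ.comp_homeomorph
    ((Homeomorph.subRight x).trans (Homeomorph.smulOfNeZero r⁻¹ (inv_ne_zero hr)))

theorem comp_smul_sub_eq_zero_of_notMem_closedBall {φ : E → ℝ} {R r : ℝ} {x y : E}
    (hφR : tsupport φ ⊆ closedBall 0 R) (hr : 0 < r) (hy : y ∉ closedBall x (r * R)) :
    φ (r⁻¹ • (y - x)) = 0 := by
  refine image_eq_zero_of_notMem_tsupport fun hmem => hy ?_
  have h := hφR hmem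
  rw [mem_closedBall_zero_iff, norm_smul, norm_inv, Real.norm_of_nonneg hr.le,
    inv_mul_le_iff₀ hr] at h
  rwa [mem_closedBall, dist_eq_norm]

variable [MeasurableSpace E] [BorelSpace E] [ProperSpace E]
  {ν : Measure E} [IsLocallyFiniteMeasure ν] {g : E → ℝ}

theorem norm_integral_comp_smul_sub_mul_sub_le (hgloc : LocallyIntegrable g ν) {φ : E → ℝ}
    {C R r : ℝ} (hφC : ∀ z, ‖φ z‖ ≤ C) (hφR : tsupport φ ⊆ closedBall 0 R) (hr : 0 < r) (x : E) :
    ‖∫ y, φ (r⁻¹ • (y - x)) * (g y - g x) ∂ν‖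
      ≤ C * ∫ y in closedBall x (r * R), |g y - g x| ∂ν := by
  have hball : IntegrableOn (fun y => |g y - g x|) (closedBall x (r * R)) ν :=
    ((hgloc.integrableOn_isCompact (isCompact_closedBall x _)).sub
      (integrableOn_const (isCompact_closedBall x _).measure_lt_top.ne)).abs
  calc ‖∫ y, φ (r⁻¹ • (y - x)) * (g y - g x) ∂ν‖
      ≤ ∫ y, ‖φ (r⁻¹ • (y - x)) * (g y - g x)‖ ∂ν := norm_integral_le_integral_norm _
    _ = ∫ y in closedBall x (r * R), ‖φ (r⁻¹ • (y - x)) * (g y - g x)‖ ∂ν := by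
        refine (setIntegral_eq_integral_of_forall_compl_eq_zero fun y hy => ?_).symm
        rw [comp_smul_sub_eq_zero_of_notMem_closedBall hφR hr hy, zero_mul, norm_zero]
    _ ≤ ∫ y in closedBall x (r * R), C * |g y - g x| ∂ν :=
        integral_mono_of_nonneg (ae_of_all _ fun _ => norm_nonneg _) (hball.const_mul C)
          (ae_of_all _ fun y => by
            dsimp only
            rw [norm_mul, Real.norm_eq_abs (g y - g x)]
            exact mul_le_mul_of_nonneg_right (hφC _) (abs_nonneg _))
    _ = C * ∫ y in closedBall x (r * R), |g y - g x| ∂ν := integral_const_mul C _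

theorem tendsto_integral_comp_smul_sub_mul_sub_of_lebesgue (hgloc : LocallyIntegrable g ν)
    {k : ℕ} {x : E}
    (hleb : Tendsto (fun r : ℝ => (∫ y in closedBall x r, |g y - g x| ∂ν) / r ^ k) (𝓝[>] 0) (𝓝 0))
    {φ : E → ℝ} (hφc : Continuous φ) (hφs : HasCompactSupport φ) :
    Tendsto (fun r : ℝ => (r ^ k)⁻¹ * ∫ y, φ (r⁻¹ • (y - x)) * (g y - g x) ∂ν) (𝓝[>] 0) (𝓝 0) := by
  obtain ⟨C, hφC⟩ := hφs.exists_bound_of_continuous hφc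
  obtain ⟨R₀, hR₀⟩ := hφs.isCompact.isBounded.subset_closedBall 0
  set R := max R₀ 1
  have hR : 0 < R := lt_max_of_lt_right one_pos
  have hφR : tsupport φ ⊆ closedBall 0 R :=
    hR₀.trans (closedBall_subset_closedBall (le_max_left _ _))
  have hscale : Tendsto (fun r : ℝ => r * R) (𝓝[>] 0) (𝓝[>] 0) :=
    tendsto_nhdsWithin_of_tendsto_nhds_of_eventually_within _
      (by simpa using (tendsto_id.mul_const R).mono_left (nhdsWithin_le_nhds (a := (0 : ℝ))))
      (eventually_nhdsWithin_of_forall fun r hr => mul_pos hr hR)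
  have hbound := ((hleb.comp hscale).const_mul (C * R ^ k))
  rw [mul_zero] at hbound
  refine squeeze_zero_norm' ?_ hbound
  filter_upwards [self_mem_nhdsWithin] with r hr
  have hrk : 0 < r ^ k := pow_pos hr k
  calc ‖(r ^ k)⁻¹ * ∫ y, φ (r⁻¹ • (y - x)) * (g y - g x) ∂ν‖
      = (r ^ k)⁻¹ * ‖∫ y, φ (r⁻¹ • (y - x)) * (g y - g x) ∂ν‖ := by
        rw [norm_mul, Real.norm_of_nonneg (inv_nonneg.2 hrk.le)]
    _ ≤ (r ^ k)⁻¹ * (C * ∫ y in closedBall x (r * R), |g y - g x| ∂ν) :=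
        mul_le_mul_of_nonneg_left (norm_integral_comp_smul_sub_mul_sub_le hgloc hφC hφR hr x)
          (inv_nonneg.2 hrk.le)
    _ = C * R ^ k * ((∫ y in closedBall x (r * R), |g y - g x| ∂ν) / (r * R) ^ k) := by
        rw [mul_pow]
        field_simp

theorem integral_comp_smul_sub_withDensity_eq (hgloc : LocallyIntegrable g ν)
    (hg : ∀ᵐ y ∂ν, 0 ≤ g y) {φ : E → ℝ} (hφc : Continuous φ) (hφs : HasCompactSupport φ)
    {r : ℝ} (hr : r ≠ 0) (x : E) :
    ∫ y, φ (r⁻¹ • (y - x)) ∂ν.withDensity (fun y => ENNReal.ofReal (g y))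
      = g x * ∫ y, φ (r⁻¹ • (y - x)) ∂ν + ∫ y, φ (r⁻¹ • (y - x)) * (g y - g x) ∂ν := by
  have hψc : Continuous fun y => φ (r⁻¹ • (y - x)) := by fun_prop
  have hψs := hφs.comp_smul_sub hr x
  rw [integral_withDensity_ofReal_eq_integral_mul hgloc.aestronglyMeasurable.aemeasurable hg]
  refine integral_mul_eq_mul_integral_add_integral_mul_sub
    (hψc.integrable_of_hasCompactSupport hψs) ?_ (g x)
  simpa only [smul_eq_mul, mul_comm] using
    hgloc.integrable_smul_left_of_hasCompactSupport hψc hψs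

end Rescaling

theorem stmt1_general {n : ℕ} (k : ℕ) (M : Set (EuclideanSpace ℝ (Fin n)))
    (hMloc : IsLocallyFiniteMeasure (μH[(k : ℝ)].restrict M))
    (g : EuclideanSpace ℝ (Fin n) → ℝ)
    (hg : ∀ᵐ x ∂(μH[(k : ℝ)].restrict M), 0 < g x)
    (hgloc : LocallyIntegrable g (μH[(k : ℝ)].restrict M))
    (μ : Measure (EuclideanSpace ℝ (Fin n)))
    (hμ : μ = (μH[(k : ℝ)].restrict M).withDensity (fun x => ENNReal.ofReal (g x)))
    (T : EuclideanSpace ℝ (Fin n) → Submodule ℝ (EuclideanSpace ℝ (Fin n)))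
    -- `T x` is the approximate tangent plane of `Hᵏ⌊M` at `x`, `Hᵏ⌊M`-a.e.:
    (hT : ∀ᵐ x ∂(μH[(k : ℝ)].restrict M),
      ∀ φ : EuclideanSpace ℝ (Fin n) → ℝ, Continuous φ → HasCompactSupport φ →
        Tendsto (fun r : ℝ =>
            (r ^ k)⁻¹ * ∫ y, φ (r⁻¹ • (y - x)) ∂(μH[(k : ℝ)].restrict M))
          (nhdsWithin 0 (Set.Ioi 0))
          (nhds (∫ y in (T x : Set (EuclideanSpace ℝ (Fin n))), φ y ∂(μH[(k : ℝ)])))) :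
    ∀ᵐ x ∂(μH[(k : ℝ)].restrict M),
      -- Lebesgue point of `g`:
      (Tendsto (fun r : ℝ =>
          (∫ y in closedBall x r, |g y - g x| ∂(μH[(k : ℝ)].restrict M)) / (r ^ k))
        (nhdsWithin 0 (Set.Ioi 0)) (nhds 0)) →
      ∀ φ : EuclideanSpace ℝ (Fin n) → ℝ, Continuous φ → HasCompactSupport φ →
        Tendsto (fun r : ℝ => (r ^ k)⁻¹ * ∫ y, φ (r⁻¹ • (y - x)) ∂μ)
          (nhdsWithin 0 (Set.Ioi 0))
          (nhds (g x * ∫ y in (T x : Set (EuclideanSpace ℝ (Fin n))), φ y ∂(μH[(k : ℝ)]))) := by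
  subst hμ
  filter_upwards [hT] with x hTx hleb φ hφc hφs
  have hsplit : ∀ᶠ r in 𝓝[>] 0,
      g x * ((r ^ k)⁻¹ * ∫ y, φ (r⁻¹ • (y - x)) ∂(μH[(k : ℝ)].restrict M))
        + (r ^ k)⁻¹ * ∫ y, φ (r⁻¹ • (y - x)) * (g y - g x) ∂(μH[(k : ℝ)].restrict M)
      = (r ^ k)⁻¹ * ∫ y, φ (r⁻¹ • (y - x))
          ∂(μH[(k : ℝ)].restrict M).withDensity (fun y => ENNReal.ofReal (g y)) := by
    filter_upwards [self_mem_nhdsWithin] with r hr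
    rw [integral_comp_smul_sub_withDensity_eq hgloc (hg.mono fun _ => le_of_lt) hφc hφs
      (ne_of_gt hr) x]
    ring
  simpa using (((hTx φ hφc hφs).const_mul (g x)).add
    (tendsto_integral_comp_smul_sub_mul_sub_of_lebesgue hgloc hleb hφc hφs)).congr' hsplit

/-- blow-up of a rectifiable measure at Lebesgue points of the density.
`M ⊂ ℝⁿ` is a countably `k`-rectifiable set with `Hᵏ⌊M` locally finite,
`T x` is the approximate tangent plane of `Hᵏ⌊M` at `x` (assumed, `Hᵏ⌊M`-a.e.,
to satisfy the defining blow-up property with multiplicity one), `g` is a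
nonnegative locally integrable density with `0 < g < ∞` a.e., and
`μ = g · (Hᵏ⌊M)`.  Then at `Hᵏ`-a.e. `x ∈ M` which is a Lebesgue point of `g`
(i.e. a.e. `x`, since a.e. point is a Lebesgue point), the rescaled measures
`r^{-k} φ((·-x)/r) dμ` converge to `g(x) Hᵏ⌊T_x M`. -/
theorem stmt1 {n : ℕ} (k : ℕ) (M : Set (EuclideanSpace ℝ (Fin n)))
    (hMrect : ∃ Z : Set (EuclideanSpace ℝ (Fin n)), μH[(k : ℝ)] Z = 0 ∧
      ∃ f : ℕ → (EuclideanSpace ℝ (Fin k) → EuclideanSpace ℝ (Fin n)),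
        (∀ i, ∃ L : NNReal, LipschitzWith L (f i)) ∧
        M ⊆ Z ∪ ⋃ i, f i '' Set.univ)
    (hMloc : IsLocallyFiniteMeasure (μH[(k : ℝ)].restrict M))
    (g : EuclideanSpace ℝ (Fin n) → ℝ)
    (hg : ∀ᵐ x ∂(μH[(k : ℝ)].restrict M), 0 < g x)
    (hgloc : LocallyIntegrable g (μH[(k : ℝ)].restrict M))
    (μ : Measure (EuclideanSpace ℝ (Fin n)))
    (hμ : μ = (μH[(k : ℝ)].restrict M).withDensity (fun x => ENNReal.ofReal (g x)))
    (T : EuclideanSpace ℝ (Fin n) → Submodule ℝ (EuclideanSpace ℝ (Fin n)))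
    -- `T x` is the approximate tangent plane of `Hᵏ⌊M` at `x`, `Hᵏ⌊M`-a.e.:
    (hT : ∀ᵐ x ∂(μH[(k : ℝ)].restrict M),
      ∀ φ : EuclideanSpace ℝ (Fin n) → ℝ, Continuous φ → HasCompactSupport φ →
        Tendsto (fun r : ℝ =>
            (r ^ k)⁻¹ * ∫ y, φ (r⁻¹ • (y - x)) ∂(μH[(k : ℝ)].restrict M))
          (nhdsWithin 0 (Set.Ioi 0))
          (nhds (∫ y in (T x : Set (EuclideanSpace ℝ (Fin n))), φ y ∂(μH[(k : ℝ)])))) :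
    ∀ᵐ x ∂(μH[(k : ℝ)].restrict M),
      -- Lebesgue point of `g`:
      (Tendsto (fun r : ℝ =>
          (∫ y in closedBall x r, |g y - g x| ∂(μH[(k : ℝ)].restrict M)) / (r ^ k))
        (nhdsWithin 0 (Set.Ioi 0)) (nhds 0)) →
      ∀ φ : EuclideanSpace ℝ (Fin n) → ℝ, Continuous φ → HasCompactSupport φ →
        Tendsto (fun r : ℝ => (r ^ k)⁻¹ * ∫ y, φ (r⁻¹ • (y - x)) ∂μ)
          (nhdsWithin 0 (Set.Ioi 0))
          (nhds (g x * ∫ y in (T x : Set (EuclideanSpace ℝ (Fin n))), φ y ∂(μH[(k : ℝ)]))) :=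
  stmt1_general k M hMloc g hg hgloc μ hμ T hT
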